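/- arXiv:2109.00377 — 7 statements merged into one kernel-verified Lean document; each statement's English description precedes it below -/
import Mathlib

section
/- Let μ₁, …, μ_L ≥ 0 with ∑ᵢ μᵢ = 1 and ∑_{k=j}^L μ_k > 0 for each j. Let A⁽¹⁾₁, …, A⁽¹⁾_L be symmetric p×p matrices satisfying ∑ᵢ μᵢ A⁽¹⁾ᵢ = 0 and the monotonicity A⁽¹⁾₁ ⪰ A⁽¹⁾₂ ⪰ … ⪰ A⁽¹⁾_L. Define recursively A⁽ʲ⁺¹⁾ᵢ = A⁽ʲ⁾ᵢ + (μ_j / ∑_{k=j+1}^L μ_k)·A⁽ʲ⁾_j for i > j. Then A⁽ʲ⁾_j ⪰ 0 for every j. -/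
open Finset

/-!
Every step of the recursion adds one fixed matrix to all later terms of the current level, so it
preserves their Loewner order, and, since the added multiple of `A⁽ʲ⁾_j` is weighted exactly by
`μ_j`, it preserves the vanishing of the weighted sum `∑_{i ≥ j} μᵢ A⁽ʲ⁾ᵢ`. At level `j` the weighted
average of the `A⁽ʲ⁾ᵢ` is then zero while `A⁽ʲ⁾_j` dominates all of them, so `A⁽ʲ⁾_j ⪰ 0`.
-/

section LevelInvariant

variable {ι 𝕜 E : Type*} [Field 𝕜] [AddCommGroup E] [Module 𝕜 E]

lemma sum_smul_add_div_sum_smul {s : Finset ι} {μ : ι → 𝕜} (hs : ∑ i ∈ s, μ i ≠ 0)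
    (B : ι → E) (m : 𝕜) (b : E) :
    ∑ i ∈ s, μ i • (B i + (m / ∑ k ∈ s, μ k) • b) = ∑ i ∈ s, μ i • B i + m • b := by
  simp only [smul_add, smul_smul, sum_add_distrib, ← sum_smul, ← sum_mul, mul_div_cancel₀ _ hs]

variable {L j : ℕ} {μ : ℕ → 𝕜} {A : ℕ → ℕ → E}

lemma sum_smul_eq_zero_succ (hjL : j ≤ L) (htail : ∑ k ∈ Icc (j + 1) L, μ k ≠ 0)
    (hrec : ∀ i ∈ Icc (j + 1) L, A (j + 1) i = A j i + (μ j / ∑ k ∈ Icc (j + 1) L, μ k) • A j j)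
    (hzero : ∑ i ∈ Icc j L, μ i • A j i = 0) :
    ∑ i ∈ Icc (j + 1) L, μ i • A (j + 1) i = 0 := by
  rw [← insert_Icc_add_one_left_eq_Icc hjL, sum_insert (by simp), add_comm] at hzero
  rw [sum_congr rfl fun i hi ↦ congrArg (μ i • ·) (hrec i hi),
    sum_smul_add_div_sum_smul htail, hzero]

variable [PartialOrder E] [IsOrderedAddMonoid E]

lemma antitoneOn_Icc_succ {c : 𝕜}
    (hrec : ∀ i ∈ Icc (j + 1) L, A (j + 1) i = A j i + c • A j j)
    (hanti : AntitoneOn (A j) (Set.Icc j L)) : AntitoneOn (A (j + 1)) (Set.Icc (j + 1) L) :=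
  ((hanti.mono (Set.Icc_subset_Icc_left j.le_succ)).add_const _).congr
    fun i hi ↦ (hrec i (by simpa using hi)).symm

lemma sum_smul_eq_zero_and_antitoneOn {m : ℕ}
    (htail : ∀ j, m ≤ j → j < L → ∑ k ∈ Icc (j + 1) L, μ k ≠ 0)
    (hrec : ∀ j, m ≤ j → j < L → ∀ i ∈ Icc (j + 1) L,
      A (j + 1) i = A j i + (μ j / ∑ k ∈ Icc (j + 1) L, μ k) • A j j)
    (hzero : ∑ i ∈ Icc m L, μ i • A m i = 0) (hanti : AntitoneOn (A m) (Set.Icc m L))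
    (hmj : m ≤ j) (hjL : j ≤ L) :
    ∑ i ∈ Icc j L, μ i • A j i = 0 ∧ AntitoneOn (A j) (Set.Icc j L) := by
  induction j, hmj using Nat.le_induction with
  | base => exact ⟨hzero, hanti⟩
  | succ j hmj ih =>
    obtain ⟨hzero, hanti⟩ := ih (by omega)
    exact ⟨sum_smul_eq_zero_succ (by omega) (htail j hmj hjL) (hrec j hmj hjL) hzero,
      antitoneOn_Icc_succ (hrec j hmj hjL) hanti⟩

variable [LinearOrder 𝕜] [IsStrictOrderedRing 𝕜] [PosSMulMono 𝕜 E]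

lemma nonneg_of_sum_smul_eq_zero_of_forall_le {s : Finset ι} {w : ι → 𝕜} {f : ι → E} {a : E}
    (hw : ∀ i ∈ s, 0 ≤ w i) (hpos : 0 < ∑ i ∈ s, w i) (hzero : ∑ i ∈ s, w i • f i = 0)
    (hle : ∀ i ∈ s, f i ≤ a) : 0 ≤ a := by
  have : 0 ≤ (∑ i ∈ s, w i) • a := calc
    0 = ∑ i ∈ s, w i • f i := hzero.symm
    _ ≤ ∑ i ∈ s, w i • a := sum_le_sum fun i hi ↦ smul_le_smul_of_nonneg_left (hle i hi) (hw i hi)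
    _ = (∑ i ∈ s, w i) • a := (sum_smul ..).symm
  exact nonneg_of_smul_nonneg_of_pos_left this hpos

end LevelInvariant

open scoped MatrixOrder in
theorem stmt10_general (p L : ℕ) (μ : ℕ → ℝ)
    (hμ : ∀ i, 0 ≤ μ i)
    (htail : ∀ j, 1 ≤ j → j ≤ L → 0 < ∑ k ∈ Finset.Icc j L, μ k)
    (A : ℕ → ℕ → Matrix (Fin p) (Fin p) ℝ)
    (hbase : ∑ i ∈ Finset.Icc 1 L, μ i • A 1 i = 0)
    (hmono : ∀ i, 1 ≤ i → i < L → (A 1 i - A 1 (i + 1)).PosSemidef)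
    (hrec : ∀ j i, 1 ≤ j → j ≤ L - 1 → j + 1 ≤ i → i ≤ L →
      A (j + 1) i = A j i + (μ j / ∑ k ∈ Finset.Icc (j + 1) L, μ k) • A j j) :
    ∀ j, 1 ≤ j → j ≤ L → (A j j).PosSemidef := by
  -- In the Loewner order `B ≤ C` unfolds to `(C - B).PosSemidef`, so `hmono` applies as is.
  have hanti : AntitoneOn (A 1) (Set.Icc 1 L) :=
    antitoneOn_of_add_one_le Set.ordConnected_Icc fun i _ hi hi' ↦ hmono i hi.1 hi'.2
  intro j hj hjL
  obtain ⟨hzero, hantij⟩ := sum_smul_eq_zero_and_antitoneOn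
    (fun k _ hkL ↦ (htail (k + 1) (by omega) hkL).ne')
    (fun k hk hkL i hi ↦ hrec k i hk (by omega) (mem_Icc.1 hi).1 (mem_Icc.1 hi).2)
    hbase hanti hj hjL
  exact Matrix.nonneg_iff_posSemidef.mp <|
    nonneg_of_sum_smul_eq_zero_of_forall_le (fun i _ ↦ hμ i) (htail j hj hjL) hzero
      fun i hi ↦ hantij ⟨le_rfl, hjL⟩ (mem_Icc.1 hi) (mem_Icc.1 hi).1

theorem stmt10 (p L : ℕ) (hL : 1 ≤ L) (μ : ℕ → ℝ)
    (hμ : ∀ i, 0 ≤ μ i) (hsum : ∑ i ∈ Finset.Icc 1 L, μ i = 1)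
    (htail : ∀ j, 1 ≤ j → j ≤ L → 0 < ∑ k ∈ Finset.Icc j L, μ k)
    (A : ℕ → ℕ → Matrix (Fin p) (Fin p) ℝ)
    (hAsymm : ∀ j i, (A j i).IsSymm)
    (hbase : ∑ i ∈ Finset.Icc 1 L, μ i • A 1 i = 0)
    (hmono : ∀ i, 1 ≤ i → i < L → (A 1 i - A 1 (i + 1)).PosSemidef)
    (hrec : ∀ j i, 1 ≤ j → j ≤ L - 1 → j + 1 ≤ i → i ≤ L →
      A (j + 1) i = A j i + (μ j / ∑ k ∈ Finset.Icc (j + 1) L, μ k) • A j j) :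
    ∀ j, 1 ≤ j → j ≤ L → (A j j).PosSemidef :=
  stmt10_general p L μ hμ htail A hbase hmono hrec
end

section
/- Let L ≥ 1, μ₁,…,μ_L ≥ 0 with positive tails ∑_{k=j}^L μ_k > 0, and let I₁ ⪰ I₂ ⪰ … ⪰ I_L be symmetric p×p matrices. Let A⁽ʲ⁾ᵢ be symmetric matrices (j ≤ i ≤ L) satisfying the recursion A⁽ʲ⁺¹⁾ᵢ = A⁽ʲ⁾ᵢ + (μ_j/∑_{k=j+1}^L μ_k) A⁽ʲ⁾_j and with A⁽ʲ⁾_j ⪰ 0 for all j and A⁽ᴸ⁾_L = 0. Define f⁽ʲ⁾ = ∑_{i=j}^L μᵢ·tr(A⁽ʲ⁾ᵢ·Iᵢ). Then f⁽¹⁾ ≥ f⁽²⁾ ≥ … ≥ f⁽ᴸ⁾ = 0. -/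
open Matrix Finset

lemma psd_trace_nonneg' {n : ℕ} {M : Matrix (Fin n) (Fin n) ℝ}
    (hM : M.PosSemidef) : 0 ≤ M.trace := by
  rw [Matrix.trace]
  apply Finset.sum_nonneg
  intro i _
  have := hM.re_dotProduct_nonneg (Pi.single i 1)
  simpa [dotProduct, Matrix.mulVec, Pi.single_apply, Matrix.diag] using this

open scoped MatrixOrder in
lemma psd_trace_mul_nonneg {n : ℕ} {A B : Matrix (Fin n) (Fin n) ℝ}
    (hA : A.PosSemidef) (hB : B.PosSemidef) : 0 ≤ (A * B).trace := by
  have hS := (CFC.sqrt_nonneg A).posSemidef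
  have h1 : (A * B).trace = (CFC.sqrt A * B * (CFC.sqrt A)ᴴ).trace := by
    conv_lhs => rw [← CFC.sqrt_mul_sqrt_self A hA.nonneg, mul_assoc, Matrix.trace_mul_comm]
    rw [hS.1.eq]
  rw [h1]
  exact psd_trace_nonneg' (hB.mul_mul_conjTranspose_same _)

theorem stmt11 (p L : ℕ) (hL : 1 ≤ L) (μ : ℕ → ℝ)
    (hμ : ∀ i, 0 ≤ μ i)
    (htail : ∀ j, 1 ≤ j → j ≤ L → 0 < ∑ k ∈ Finset.Icc j L, μ k)
    (I : ℕ → Matrix (Fin p) (Fin p) ℝ)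
    (hIsymm : ∀ i, (I i).IsSymm)
    (hImono : ∀ i i', 1 ≤ i → i ≤ i' → i' ≤ L → (I i - I i').PosSemidef)
    (A : ℕ → ℕ → Matrix (Fin p) (Fin p) ℝ)
    (hAsymm : ∀ j i, (A j i).IsSymm)
    (hrec : ∀ j i, 1 ≤ j → j ≤ L - 1 → j + 1 ≤ i → i ≤ L →
      A (j + 1) i = A j i + (μ j / ∑ k ∈ Finset.Icc (j + 1) L, μ k) • A j j)
    (hApsd : ∀ j, 1 ≤ j → j ≤ L → (A j j).PosSemidef)
    (hALL : A L L = 0)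
    (f : ℕ → ℝ)
    (hf : ∀ j, f j = ∑ i ∈ Finset.Icc j L, μ i * (A j i * I i).trace) :
    (∀ j, 1 ≤ j → j < L → f (j + 1) ≤ f j) ∧ f L = 0 := by
  constructor
  · intro j h1 hjL
    set S : ℝ := ∑ k ∈ Finset.Icc (j + 1) L, μ k with hSdef
    have hS : 0 < S := htail (j + 1) (by omega) (by omega)
    set c : ℝ := μ j / S with hcdef
    have hc : 0 ≤ c := div_nonneg (hμ j) hS.le
    have hIoc : Finset.Icc (j + 1) L = Finset.Ioc j L := Finset.Icc_add_one_left_eq_Ioc j L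
    have hfj : f j = μ j * (A j j * I j).trace +
        ∑ i ∈ Finset.Ioc j L, μ i * (A j i * I i).trace := by
      rw [hf, Finset.Icc_eq_cons_Ioc hjL.le, Finset.sum_cons]
    have hfj1 : f (j + 1) = ∑ i ∈ Finset.Ioc j L, μ i * (A j i * I i).trace
        + c * ∑ i ∈ Finset.Ioc j L, μ i * (A j j * I i).trace := by
      rw [hf, hIoc, Finset.mul_sum, ← Finset.sum_add_distrib]
      apply Finset.sum_congr rfl
      intro i hi
      rw [Finset.mem_Ioc] at hi
      rw [hrec j i h1 (by omega) (by omega) hi.2]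
      rw [Matrix.add_mul, Matrix.smul_mul, Matrix.trace_add, Matrix.trace_smul]
      push_cast [smul_eq_mul]
      ring
    rw [hfj, hfj1]
    have key : ∑ i ∈ Finset.Ioc j L, μ i * (A j j * I i).trace
        ≤ S * (A j j * I j).trace := by
      rw [hSdef, hIoc, Finset.sum_mul]
      apply Finset.sum_le_sum
      intro i hi
      rw [Finset.mem_Ioc] at hi
      have hApsd' := hApsd j h1 (by omega)
      have hpsd := hImono j i h1 hi.1.le hi.2
      have htr : 0 ≤ (A j j * (I j - I i)).trace := psd_trace_mul_nonneg hApsd' hpsd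
      rw [Matrix.mul_sub, Matrix.trace_sub] at htr
      have : (A j j * I i).trace ≤ (A j j * I j).trace := by linarith
      exact mul_le_mul_of_nonneg_left this (hμ i)
    have : c * ∑ i ∈ Finset.Ioc j L, μ i * (A j j * I i).trace
        ≤ c * (S * (A j j * I j).trace) := mul_le_mul_of_nonneg_left key hc
    have hcs : c * S = μ j := div_mul_cancel₀ _ hS.ne'
    have h2 : c * (S * (A j j * I j).trace) = μ j * (A j j * I j).trace := by
      rw [← mul_assoc, hcs]
    linarith
  · rw [hf, Finset.Icc_self, Finset.sum_singleton, hALL, Matrix.zero_mul,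
      Matrix.trace_zero, mul_zero]
end

section
/- Let B, K₁, K₂ be real symmetric positive definite p×p matrices, γ ∈ (0,1), and K_Δ = B + γK₁ + (1−γ)K₂. Then (B+K₂)K_Δ⁻¹(B+K₁) − B is positive definite. -/
/-! With `A₁ = B + K₁`, `A₂ = B + K₂` and `N = (1 - γ) A₁⁻¹ + γ A₂⁻¹`, one has
`N⁻¹ = A₂ K_Δ⁻¹ A₁`. Matrix inversion is strictly antitone on positive definite matrices, so
`A₁⁻¹, A₂⁻¹ < B⁻¹`, hence `N < B⁻¹`, and inverting once more gives `B < N⁻¹`. -/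

open Matrix

namespace Matrix

variable {n : Type*} [Fintype n] [DecidableEq n]

lemma inv_smul_inv_add_smul_inv {R : Type*} [CommRing R] {A C : Matrix n n R}
    (hA : IsUnit A) (hC : IsUnit C) (a c : R) :
    (a • A⁻¹ + c • C⁻¹)⁻¹ = C * (c • A + a • C)⁻¹ * A := by
  rw [isUnit_iff_isUnit_det] at hA hC
  have hmean : a • A⁻¹ + c • C⁻¹ = A⁻¹ * (c • A + a • C) * C⁻¹ := by
    rw [Matrix.mul_add, Matrix.add_mul, Matrix.mul_smul, Matrix.smul_mul, Matrix.mul_smul,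
      Matrix.smul_mul, nonsing_inv_mul _ hA, Matrix.mul_assoc, mul_nonsing_inv _ hC,
      Matrix.one_mul, Matrix.mul_one, add_comm]
  rw [hmean, mul_inv_rev, mul_inv_rev, nonsing_inv_nonsing_inv _ hA,
    nonsing_inv_nonsing_inv _ hC, Matrix.mul_assoc]

open scoped ComplexOrder in
/-- Via the parallel-sum identity `C⁻¹ - A⁻¹ = C⁻¹ (C⁻¹ + (A - C)⁻¹)⁻¹ C⁻¹`. -/
lemma PosDef.inv_sub_inv {𝕜 : Type*} [RCLike 𝕜] {A C : Matrix n n 𝕜} (hC : C.PosDef)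
    (hAC : (A - C).PosDef) : (C⁻¹ - A⁻¹).PosDef := by
  have hA : A.PosDef := by simpa using hAC.add hC
  have hCdet := (isUnit_iff_isUnit_det C).mp hC.isUnit
  have hparallel : (C⁻¹ + (A - C)⁻¹)⁻¹ = (A - C) * A⁻¹ * C := by
    rw [inv_add_inv (by simp [hC.isUnit, hAC.isUnit]), add_sub_cancel, mul_inv_rev, mul_inv_rev,
      nonsing_inv_nonsing_inv _ ((isUnit_iff_isUnit_det _).mp hAC.isUnit),
      nonsing_inv_nonsing_inv _ hCdet, Matrix.mul_assoc]
  have key : C⁻¹ - A⁻¹ = (C⁻¹)ᴴ * (C⁻¹ + (A - C)⁻¹)⁻¹ * C⁻¹ := by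
    rw [hC.inv.1.eq, hparallel, Matrix.inv_sub_inv (by simp [hC.isUnit, hA.isUnit])]
    simp [Matrix.mul_assoc, mul_nonsing_inv _ hCdet]
  rw [key]
  exact (hC.inv.add hAC.inv).inv.conjTranspose_mul_mul_same
    (mulVec_injective_of_isUnit hC.inv.isUnit)

end Matrix

theorem stmt12 (p : ℕ) (B K₁ K₂ : Matrix (Fin p) (Fin p) ℝ)
    (hB : B.PosDef) (hK₁ : K₁.PosDef) (hK₂ : K₂.PosDef)
    (γ : ℝ) (hγ0 : 0 < γ) (hγ1 : γ < 1) :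
    ((B + K₂) * (B + γ • K₁ + (1 - γ) • K₂)⁻¹ * (B + K₁) - B).PosDef := by
  have hγ1' : 0 < 1 - γ := sub_pos.mpr hγ1
  have hA₁ : (B + K₁).PosDef := hB.add hK₁
  have hA₂ : (B + K₂).PosDef := hB.add hK₂
  set N := (1 - γ) • (B + K₁)⁻¹ + γ • (B + K₂)⁻¹ with hNdef
  have hN : N.PosDef := (hA₁.inv.smul hγ1').add (hA₂.inv.smul hγ0)
  have hNinv : N⁻¹ = (B + K₂) * (B + γ • K₁ + (1 - γ) • K₂)⁻¹ * (B + K₁) := by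
    rw [hNdef, inv_smul_inv_add_smul_inv hA₁.isUnit hA₂.isUnit]
    congr 3
    module
  have hBN : (B⁻¹ - N).PosDef := by
    have h₁ := hB.inv_sub_inv (A := B + K₁) (by simpa using hK₁)
    have h₂ := hB.inv_sub_inv (A := B + K₂) (by simpa using hK₂)
    rw [show B⁻¹ - N = (1 - γ) • (B⁻¹ - (B + K₁)⁻¹) + γ • (B⁻¹ - (B + K₂)⁻¹) by
      rw [hNdef]; module]
    exact (h₁.smul hγ1').add (h₂.smul hγ0)
  simpa [hNinv, nonsing_inv_nonsing_inv _ ((isUnit_iff_isUnit_det _).mp hB.isUnit)] using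
    hN.inv_sub_inv (A := B⁻¹) hBN
end

section
/- Let Δ₁ and K_Y be real symmetric positive definite p×p matrices and γ ∈ (0,1). Then (Δ₁⁻¹+K_Y⁻¹)·((1−γ)Δ₁⁻¹+K_Y⁻¹)⁻¹·(Δ₁⁻¹+K_Y⁻¹)·(1−γ)/γ + γ(Δ₁+(1−γ)K_Y)⁻¹ − Δ₁⁻¹ = ((1−γ)/γ)·(Δ₁⁻¹+K_Y⁻¹). -/
open Matrix

private lemma posDef_smul {p : ℕ} (A : Matrix (Fin p) (Fin p) ℝ) (h : A.PosDef)
    (c : ℝ) (hc : 0 < c) : (c • A).PosDef := by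
  refine ⟨?_, fun x hx => ?_⟩
  · show (c • A)ᴴ = c • A
    rw [conjTranspose_smul, h.1.eq]; simp
  · exact (h.smul hc).2 hx

theorem stmt14 (p : ℕ) (Δ₁ KY : Matrix (Fin p) (Fin p) ℝ)
    (hΔ₁ : Δ₁.PosDef) (hKY : KY.PosDef)
    (γ : ℝ) (hγ0 : 0 < γ) (hγ1 : γ < 1) :
    ((1 - γ) / γ) •
        ((Δ₁⁻¹ + KY⁻¹) * ((1 - γ) • Δ₁⁻¹ + KY⁻¹)⁻¹ * (Δ₁⁻¹ + KY⁻¹)) +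
      γ • (Δ₁ + (1 - γ) • KY)⁻¹ - Δ₁⁻¹ =
      ((1 - γ) / γ) • (Δ₁⁻¹ + KY⁻¹) := by
  have hc : (0:ℝ) < 1 - γ := by linarith
  set A := Δ₁⁻¹ with hA
  set B := KY⁻¹ with hB
  set M := (1 - γ) • A + B with hM
  have hMpd : M.PosDef := ((posDef_smul A hΔ₁.inv (1 - γ) hc).add hKY.inv : _)
  -- invertibility facts
  have hΔ₁u : IsUnit Δ₁.det := isUnit_iff_ne_zero.mpr hΔ₁.det_pos.ne'
  have hKYu : IsUnit KY.det := isUnit_iff_ne_zero.mpr hKY.det_pos.ne'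
  have hMu : IsUnit M.det := isUnit_iff_ne_zero.mpr hMpd.det_pos.ne'
  have e1 : M * M⁻¹ = 1 := mul_nonsing_inv M hMu
  have e2 : M⁻¹ * M = 1 := nonsing_inv_mul M hMu
  have eΔ : Δ₁ * A = 1 := mul_nonsing_inv Δ₁ hΔ₁u
  have eΔ' : A * Δ₁ = 1 := nonsing_inv_mul Δ₁ hΔ₁u
  have eK : KY * B = 1 := mul_nonsing_inv KY hKYu
  have eK' : B * KY = 1 := nonsing_inv_mul KY hKYu
  -- (Δ₁ + (1-γ)•KY)⁻¹ = B * M⁻¹ * A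
  have hinv : (Δ₁ + (1 - γ) • KY)⁻¹ = B * M⁻¹ * A := by
    refine inv_eq_right_inv ?_
    have key : (Δ₁ + (1 - γ) • KY) * B = Δ₁ * M := by
      rw [hM, mul_add, add_mul, smul_mul_assoc, eK, mul_smul_comm, eΔ]
      rw [add_comm]
    calc (Δ₁ + (1 - γ) • KY) * (B * M⁻¹ * A)
        = ((Δ₁ + (1 - γ) • KY) * B) * M⁻¹ * A := by ring_nf; rw [Matrix.mul_assoc, Matrix.mul_assoc, Matrix.mul_assoc]
      _ = Δ₁ * M * M⁻¹ * A := by rw [key]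
      _ = 1 := by rw [Matrix.mul_assoc Δ₁ M M⁻¹, e1, Matrix.mul_one, eΔ]
  have hAB : A + B = M + γ • A := by rw [hM]; module
  have e3 : ∀ X : Matrix (Fin p) (Fin p) ℝ, M * (M⁻¹ * X) = X := fun X => by
    rw [← Matrix.mul_assoc, e1, Matrix.one_mul]
  have key1 : (A + B) * M⁻¹ * (A + B)
      = M + (2 * γ) • A + (γ ^ 2) • (A * (M⁻¹ * A)) := by
    rw [hAB]
    simp only [add_mul, mul_add, smul_mul_assoc, mul_smul_comm, Matrix.mul_assoc, e1, e2, e3, Matrix.one_mul,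
      Matrix.mul_one, smul_smul]
    module
  have key2 : B * M⁻¹ * A = A - (1 - γ) • (A * (M⁻¹ * A)) := by
    have hBM : B = M - (1 - γ) • A := by rw [hM]; abel
    rw [hBM, sub_mul, sub_mul, smul_mul_assoc, smul_mul_assoc, Matrix.mul_assoc, e3, Matrix.mul_assoc]
  rw [hinv, key1, key2]
  have hγ : γ ≠ 0 := hγ0.ne'
  match_scalars <;> field_simp <;> ring
end

section
/- Let D, Δ₁, K_Y be real symmetric positive definite p×p matrices, γ ∈ (0,1), and M₃ a real symmetric positive semidefinite matrix with (D⁻¹ − Δ₁⁻¹ − K_Y⁻¹)·M₃ = 0. Set P = Δ₁⁻¹ + K_Y⁻¹. Then tr( M₃·( ((1−γ)/γ)·P − ((1−γ)/γ²)·P·(D⁻¹ + ((1−γ)/γ)·P)⁻¹·P ) ) = 0. -/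
/-! Write `c = (1 - γ) / γ` and `Q = D⁻¹ + c • P`. The slackness condition says `D⁻¹ * M₃ = P * M₃`,
hence `Q * M₃ = (1 + c) • (P * M₃)` and `Q⁻¹ * (P * M₃) = (1 + c)⁻¹ • M₃`. Since
`(1 - γ) / γ ^ 2 = c * (1 + c)`, the matrix `X` in the trace satisfies `X * M₃ = c • P * M₃ - c • P * M₃ = 0`,
and `tr (M₃ * X) = tr (X * M₃)`. -/

open Matrix

namespace Matrix

variable {n m K : Type*} [Fintype n] [DecidableEq n] [Field K]

theorem nonsing_inv_mul_eq_inv_smul_of_mul_eq_smul {Q : Matrix n n K} {N M : Matrix n m K}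
    (hQ : IsUnit Q.det) {a : K} (ha : a ≠ 0) (h : Q * M = a • N) : Q⁻¹ * N = a⁻¹ • M := by
  have hN : N = a⁻¹ • (Q * M) := by rw [h, smul_smul, inv_mul_cancel₀ ha, one_smul]
  rw [hN, Matrix.mul_smul, ← Matrix.mul_assoc, nonsing_inv_mul Q hQ, Matrix.one_mul]

theorem smul_sub_smul_mul_inv_add_smul_mul_eq_zero {A P : Matrix n n K} {M : Matrix n m K}
    {c : K} (hc : 1 + c ≠ 0) (hQ : IsUnit (A + c • P).det) (hAM : A * M = P * M) :
    (c • P - (c * (1 + c)) • (P * (A + c • P)⁻¹ * P)) * M = 0 := by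
  have hQM : (A + c • P) * M = (1 + c) • (P * M) := by
    rw [Matrix.add_mul, hAM, Matrix.smul_mul, add_smul, one_smul]
  rw [Matrix.sub_mul, Matrix.smul_mul, Matrix.smul_mul, Matrix.mul_assoc, Matrix.mul_assoc,
    nonsing_inv_mul_eq_inv_smul_of_mul_eq_smul hQ hc hQM, Matrix.mul_smul, smul_smul,
    mul_assoc, mul_inv_cancel₀ hc, mul_one, sub_self]

end Matrix

theorem stmt15_general (p : ℕ) (D Δ₁ KY M₃ : Matrix (Fin p) (Fin p) ℝ)
    (hD : D.PosDef) (hΔ₁ : Δ₁.PosDef) (hKY : KY.PosDef)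
    (γ : ℝ) (hγ0 : 0 < γ) (hγ1 : γ < 1)
    (hslack : (D⁻¹ - Δ₁⁻¹ - KY⁻¹) * M₃ = 0)
    (P : Matrix (Fin p) (Fin p) ℝ) (hP : P = Δ₁⁻¹ + KY⁻¹) :
    (M₃ * (((1 - γ) / γ) • P -
      ((1 - γ) / γ ^ 2) • (P * (D⁻¹ + ((1 - γ) / γ) • P)⁻¹ * P))).trace = 0 := by
  set c := (1 - γ) / γ with hc_def
  have hc : 0 < c := div_pos (by linarith) hγ0
  have hcoef : (1 - γ) / γ ^ 2 = c * (1 + c) := by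
    rw [hc_def]
    field_simp
    ring
  have hQ : (D⁻¹ + c • P).PosDef := hD.inv.add ((hP ▸ hΔ₁.inv.add hKY.inv).smul hc)
  have hAM : D⁻¹ * M₃ = P * M₃ := by
    rw [sub_sub, Matrix.sub_mul, sub_eq_zero, ← hP] at hslack
    exact hslack
  rw [trace_mul_comm, hcoef, smul_sub_smul_mul_inv_add_smul_mul_eq_zero (by linarith)
    (isUnit_iff_isUnit_det _ |>.mp hQ.isUnit) hAM, trace_zero]

theorem stmt15 (p : ℕ) (D Δ₁ KY M₃ : Matrix (Fin p) (Fin p) ℝ)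
    (hD : D.PosDef) (hΔ₁ : Δ₁.PosDef) (hKY : KY.PosDef)
    (hM₃ : M₃.PosSemidef)
    (γ : ℝ) (hγ0 : 0 < γ) (hγ1 : γ < 1)
    (hslack : (D⁻¹ - Δ₁⁻¹ - KY⁻¹) * M₃ = 0)
    (P : Matrix (Fin p) (Fin p) ℝ) (hP : P = Δ₁⁻¹ + KY⁻¹) :
    (M₃ * (((1 - γ) / γ) • P -
      ((1 - γ) / γ ^ 2) • (P * (D⁻¹ + ((1 - γ) / γ) • P)⁻¹ * P))).trace = 0 :=
  stmt15_general p D Δ₁ KY M₃ hD hΔ₁ hKY γ hγ0 hγ1 hslack P hP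
end

section
/- Let K, Δ₂, K_Z be real symmetric positive definite p×p matrices with Δ₂ ⪯ K (i.e., Δ₂⁻¹ = K⁻¹ + B₂ for some positive semidefinite B₂), let γ ∈ (0,1), and let M₂ be a real symmetric positive semidefinite matrix with B₂·M₂ = 0 where B₂ = Δ₂⁻¹ − K⁻¹. Then tr( M₂·( (I + Δ₂⁻¹K_Z)·((1−γ)K + γΔ₂ + K_Z)⁻¹·(I + K_ZΔ₂⁻¹) − Δ₂⁻¹(Δ₂+K_Z)Δ₂⁻¹ ) ) = (1−γ)·tr( M₂·(I + Δ₂⁻¹K_Z)·((1−γ)K + γΔ₂ + K_Z)⁻¹·K⁻¹·B₂ ) = 0. -/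
open Matrix

/-
Writing S = (1 - γ) K + γ Δ₂ + K_Z and A = I + Δ₂⁻¹ K_Z, one has Δ₂⁻¹ (Δ₂ + K_Z) Δ₂⁻¹ = A S⁻¹ S Δ₂⁻¹,
and (I + K_Z Δ₂⁻¹) - S Δ₂⁻¹ = (1 - γ)(I - K Δ₂⁻¹) = -(1 - γ) K B₂. So both traces have the form
tr(M₂ C B₂) = tr(B₂ M₂ C), which vanishes because B₂ M₂ = 0.
-/

variable {n R : Type*} [Fintype n] [CommRing R]

namespace Matrix

theorem trace_mul_mul_eq_zero_of_mul_eq_zero {B M : Matrix n n R} (h : B * M = 0)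
    (C : Matrix n n R) : (M * C * B).trace = 0 := by
  rw [trace_mul_comm, ← Matrix.mul_assoc, h, Matrix.zero_mul, trace_zero]

variable [DecidableEq n]

theorem sandwich_sub_eq_mul_sub {S Δ Z : Matrix n n R} (hS : IsUnit S.det) (hΔ : IsUnit Δ.det) :
    (1 + Δ⁻¹ * Z) * S⁻¹ * (1 + Z * Δ⁻¹) - Δ⁻¹ * (Δ + Z) * Δ⁻¹ =
      (1 + Δ⁻¹ * Z) * S⁻¹ * (1 + Z * Δ⁻¹ - S * Δ⁻¹) := by
  have hΔ' : Δ⁻¹ * (Δ + Z) * Δ⁻¹ = (1 + Δ⁻¹ * Z) * S⁻¹ * (S * Δ⁻¹) := by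
    rw [Matrix.mul_add, nonsing_inv_mul _ hΔ, ← Matrix.mul_assoc,
      Matrix.mul_assoc _ S⁻¹, nonsing_inv_mul _ hS, Matrix.mul_one]
  rw [hΔ', Matrix.mul_sub]

theorem one_add_mul_inv_sub_convexComb_mul_inv {K Δ Z : Matrix n n R} (hK : IsUnit K.det)
    (hΔ : IsUnit Δ.det) (γ : R) :
    1 + Z * Δ⁻¹ - ((1 - γ) • K + γ • Δ + Z) * Δ⁻¹ = -(1 - γ) • (K * (Δ⁻¹ - K⁻¹)) := by
  rw [Matrix.mul_sub, mul_nonsing_inv _ hK, Matrix.add_mul, Matrix.add_mul, Matrix.smul_mul,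
    Matrix.smul_mul, mul_nonsing_inv _ hΔ]
  module

end Matrix

theorem stmt17_general (p : ℕ) (K Δ₂ KZ M₂ B₂ : Matrix (Fin p) (Fin p) ℝ)
    (hK : K.PosDef) (hΔ₂ : Δ₂.PosDef) (hKZ : KZ.PosDef)
    (hB₂ : B₂ = Δ₂⁻¹ - K⁻¹)
    (hB₂M₂ : B₂ * M₂ = 0)
    (γ : ℝ) (hγ0 : 0 < γ) (hγ1 : γ < 1) :
    (M₂ * ((1 + Δ₂⁻¹ * KZ) * ((1 - γ) • K + γ • Δ₂ + KZ)⁻¹ * (1 + KZ * Δ₂⁻¹) -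
        Δ₂⁻¹ * (Δ₂ + KZ) * Δ₂⁻¹)).trace =
      (1 - γ) * (M₂ * (1 + Δ₂⁻¹ * KZ) * ((1 - γ) • K + γ • Δ₂ + KZ)⁻¹ * K⁻¹ * B₂).trace ∧
    (1 - γ) * (M₂ * (1 + Δ₂⁻¹ * KZ) * ((1 - γ) • K + γ • Δ₂ + KZ)⁻¹ * K⁻¹ * B₂).trace = 0 := by
  set S := (1 - γ) • K + γ • Δ₂ + KZ with hS_def
  have hS : S.PosDef := ((hK.smul (sub_pos.mpr hγ1)).add (hΔ₂.smul hγ0)).add hKZ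
  have hzero := trace_mul_mul_eq_zero_of_mul_eq_zero hB₂M₂
  have hright : (M₂ * (1 + Δ₂⁻¹ * KZ) * S⁻¹ * K⁻¹ * B₂).trace = 0 := by
    simpa only [Matrix.mul_assoc] using hzero ((1 + Δ₂⁻¹ * KZ) * S⁻¹ * K⁻¹)
  refine ⟨?_, by rw [hright, mul_zero]⟩
  rw [hright, mul_zero, sandwich_sub_eq_mul_sub hS.det_pos.ne'.isUnit hΔ₂.det_pos.ne'.isUnit, hS_def,
    one_add_mul_inv_sub_convexComb_mul_inv hK.det_pos.ne'.isUnit hΔ₂.det_pos.ne'.isUnit, ← hB₂, ← hS_def,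
    Matrix.mul_smul, Matrix.mul_smul, trace_smul]
  simpa only [Matrix.mul_assoc, smul_eq_zero] using Or.inr (hzero ((1 + Δ₂⁻¹ * KZ) * S⁻¹ * K))

theorem stmt17 (p : ℕ) (K Δ₂ KZ M₂ B₂ : Matrix (Fin p) (Fin p) ℝ)
    (hK : K.PosDef) (hΔ₂ : Δ₂.PosDef) (hKZ : KZ.PosDef)
    (hB₂ : B₂ = Δ₂⁻¹ - K⁻¹) (hB₂psd : B₂.PosSemidef)
    (hM₂ : M₂.PosSemidef) (hB₂M₂ : B₂ * M₂ = 0)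
    (γ : ℝ) (hγ0 : 0 < γ) (hγ1 : γ < 1) :
    (M₂ * ((1 + Δ₂⁻¹ * KZ) * ((1 - γ) • K + γ • Δ₂ + KZ)⁻¹ * (1 + KZ * Δ₂⁻¹) -
        Δ₂⁻¹ * (Δ₂ + KZ) * Δ₂⁻¹)).trace =
      (1 - γ) * (M₂ * (1 + Δ₂⁻¹ * KZ) * ((1 - γ) • K + γ • Δ₂ + KZ)⁻¹ * K⁻¹ * B₂).trace ∧
    (1 - γ) * (M₂ * (1 + Δ₂⁻¹ * KZ) * ((1 - γ) • K + γ • Δ₂ + KZ)⁻¹ * K⁻¹ * B₂).trace = 0 :=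
  stmt17_general p K Δ₂ KZ M₂ B₂ hK hΔ₂ hKZ hB₂ hB₂M₂ γ hγ0 hγ1
end

section
/- Let B, K₁, K₂, S be real symmetric p×p matrices with B, S − B positive semidefinite and K₁, K₂ positive definite, let γ ∈ (0,1), K_Δ = B + γK₁ + (1−γ)K₂, and P = (B+K₁)K_Δ⁻¹(B+K₂). If a symmetric positive definite matrix J satisfies both J⁻¹ ⪯ Pᵀ + (S−B) and J ⪯ (Pᵀ − B)⁻¹ (with Pᵀ − B positive definite), and M₁, M₂ are symmetric positive semidefinite with B·M₁ = 0 and (S−B)·M₂ = 0, then tr( (M₂ − M₁)·( P·J·Pᵀ − P ) ) ≥ 0, provided Pᵀ = (B+K₂)K_Δ⁻¹(B+K₁). -/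
/-!
Write `Q = Pᵀ + (S - B)` and `R = Pᵀ - B`. For any invertible `A` with `Pᵀ = A + C`,
`P J Pᵀ - P = P (J - A⁻¹) Pᵀ + P A⁻¹ C`, and the last term is invisible to `tr (M * ·)`
as soon as `C M = 0`. Taking `A = Q` against `M₂` and `A = R` against `M₁` reduces the claim to
`Q⁻¹ ⪯ J ⪯ R⁻¹`: the second inequality is the data-processing hypothesis, the first is the
Cramér–Rao hypothesis `J⁻¹ ⪯ Q` after inverting, and the trace of a product of positive
semidefinite matrices is nonnegative.
-/

open Matrix

namespace Matrix

open scoped ComplexOrder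

variable {n 𝕜 : Type*} [Fintype n] [RCLike 𝕜]

open scoped MatrixOrder in
lemma PosSemidef.trace_mul_nonneg {A B : Matrix n n 𝕜} (hA : A.PosSemidef)
    (hB : B.PosSemidef) : 0 ≤ (A * B).trace := by
  classical
  obtain ⟨C, rfl⟩ := CStarAlgebra.nonneg_iff_eq_star_mul_self.mp hB.nonneg
  rw [← Matrix.mul_assoc, trace_mul_comm, ← Matrix.mul_assoc]
  exact (hA.mul_mul_conjTranspose_same C).trace_nonneg

lemma PosDef.posSemidef_inv_sub_inv [DecidableEq n] {A B : Matrix n n 𝕜} (hA : A.PosDef)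
    (hB : B.PosDef) (h : (B - A).PosSemidef) : (A⁻¹ - B⁻¹).PosSemidef := by
  have := hA.isUnit.invertible
  have := hB.isUnit.invertible
  have key : A⁻¹ - B⁻¹ =
      (B⁻¹)ᴴ * (B - A) * B⁻¹ + ((B - A) * B⁻¹)ᴴ * A⁻¹ * ((B - A) * B⁻¹) := by
    rw [conjTranspose_mul, hB.inv.isHermitian.eq, h.isHermitian.eq]
    simp only [Matrix.mul_sub, Matrix.sub_mul, Matrix.mul_assoc, mul_inv_of_invertible,
      inv_mul_of_invertible, Matrix.mul_one, Matrix.one_mul,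
      inv_mul_cancel_left_of_invertible]
    abel
  rw [key]
  exact (h.conjTranspose_mul_mul_same _).add
    (hA.inv.posSemidef.conjTranspose_mul_mul_same _)

end Matrix

section CommRing

variable {n R : Type*} [Fintype n] [DecidableEq n] [CommRing R]

lemma trace_mul_sub_eq_of_transpose_eq_add {M P J A C : Matrix n n R} (hA : IsUnit A)
    (hPt : Pᵀ = A + C) (hCM : C * M = 0) :
    (M * (P * J * Pᵀ - P)).trace = (M * (P * (J - A⁻¹) * Pᵀ)).trace := by
  have hPA : P * A⁻¹ * A = P := by
    rw [Matrix.mul_assoc, nonsing_inv_mul _ ((isUnit_iff_isUnit_det A).mp hA), Matrix.mul_one]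
  have hdecomp : P * J * Pᵀ - P = P * (J - A⁻¹) * Pᵀ + P * A⁻¹ * C := by
    rw [Matrix.mul_sub, Matrix.sub_mul, hPt, Matrix.mul_add (P * A⁻¹), hPA]
    abel
  have hnull : (M * (P * A⁻¹ * C)).trace = 0 := by
    rw [trace_mul_comm, Matrix.mul_assoc, hCM, Matrix.mul_zero, trace_zero]
  rw [hdecomp, Matrix.mul_add, trace_add, hnull, add_zero]

end CommRing

lemma trace_mul_mul_mul_transpose_nonneg {n : Type*} [Fintype n] {M P X : Matrix n n ℝ}
    (hM : M.PosSemidef) (hX : X.PosSemidef) : 0 ≤ (M * (P * X * Pᵀ)).trace := by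
  simpa [conjTranspose_eq_transpose_of_trivial] using
    hM.trace_mul_nonneg (hX.mul_mul_conjTranspose_same P)

theorem stmt18_general (p : ℕ) (B S M₁ M₂ J : Matrix (Fin p) (Fin p) ℝ)
    (P : Matrix (Fin p) (Fin p) ℝ)
    (hJ : J.PosDef)
    (hCR : (Pᵀ + (S - B) - J⁻¹).PosSemidef)
    (hPtB : (Pᵀ - B).PosDef)
    (hDP : ((Pᵀ - B)⁻¹ - J).PosSemidef)
    (hM₁ : M₁.PosSemidef) (hM₂ : M₂.PosSemidef)
    (hBM₁ : B * M₁ = 0) (hSBM₂ : (S - B) * M₂ = 0) :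
    0 ≤ ((M₂ - M₁) * (P * J * Pᵀ - P)).trace := by
  set Q := Pᵀ + (S - B) with hQdef
  set R := Pᵀ - B
  have hQ : Q.PosDef := by
    simpa using hJ.inv.add_posSemidef hCR
  have hJQ : (J - Q⁻¹).PosSemidef := by
    have := hJ.isUnit.invertible
    simpa only [inv_inv_of_invertible] using hJ.inv.posSemidef_inv_sub_inv hQ hCR
  have hM₂part : (M₂ * (P * J * Pᵀ - P)).trace = (M₂ * (P * (J - Q⁻¹) * Pᵀ)).trace :=
    trace_mul_sub_eq_of_transpose_eq_add (C := -(S - B)) hQ.isUnit (by rw [hQdef]; abel)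
      (by rw [Matrix.neg_mul, hSBM₂, neg_zero])
  have hM₁part :
      (M₁ * (P * J * Pᵀ - P)).trace = -(M₁ * (P * (R⁻¹ - J) * Pᵀ)).trace := by
    rw [trace_mul_sub_eq_of_transpose_eq_add hPtB.isUnit (sub_add_cancel _ _).symm hBM₁,
      ← neg_sub, Matrix.mul_neg, Matrix.neg_mul, Matrix.mul_neg, trace_neg]
  rw [Matrix.sub_mul, trace_sub, hM₂part, hM₁part, sub_neg_eq_add]
  exact add_nonneg (trace_mul_mul_mul_transpose_nonneg hM₂ hJQ)
    (trace_mul_mul_mul_transpose_nonneg hM₁ hDP)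

theorem stmt18 (p : ℕ) (B K₁ K₂ S M₁ M₂ J : Matrix (Fin p) (Fin p) ℝ)
    (hB : B.PosSemidef) (hSB : (S - B).PosSemidef)
    (hK₁ : K₁.PosDef) (hK₂ : K₂.PosDef)
    (γ : ℝ) (hγ0 : 0 < γ) (hγ1 : γ < 1)
    (KΔ : Matrix (Fin p) (Fin p) ℝ) (hKΔ : KΔ = B + γ • K₁ + (1 - γ) • K₂)
    (P : Matrix (Fin p) (Fin p) ℝ) (hP : P = (B + K₁) * KΔ⁻¹ * (B + K₂))
    (hPt : Pᵀ = (B + K₂) * KΔ⁻¹ * (B + K₁))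
    (hJ : J.PosDef)
    (hCR : (Pᵀ + (S - B) - J⁻¹).PosSemidef)
    (hPtB : (Pᵀ - B).PosDef)
    (hDP : ((Pᵀ - B)⁻¹ - J).PosSemidef)
    (hM₁ : M₁.PosSemidef) (hM₂ : M₂.PosSemidef)
    (hBM₁ : B * M₁ = 0) (hSBM₂ : (S - B) * M₂ = 0) :
    0 ≤ ((M₂ - M₁) * (P * J * Pᵀ - P)).trace :=
  stmt18_general p B S M₁ M₂ J P hJ hCR hPtB hDP hM₁ hM₂ hBM₁ hSBM₂
end
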